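/- arXiv:1805.03628 — 3 statements merged into one kernel-verified Lean document; each statement's English description precedes it below -/
import Mathlib

section
/- Let f and g be complex polynomials of degree at most n, not both zero. The Bezout matrix B(f,g) ∈ M_n(ℂ) is singular if and only if f and g have a common root (in ℂ) or both have degree strictly less than n. -/
/-!
Write `b(t, s) = (f(t)g(s) - f(s)g(t))/(t - s) = g(s) h_f - f(s) h_g`, where
`h_p = (p(t) - p(s))/(t - s)` has the Hankel coefficients `[tⁱ sʲ] h_p = p_{i+j+1}`; the symmetry
`b(t, s) = b(s, t)` bounds the degree of `b` in `s` by its degree `< n` in `t`.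

If `deg f = n` and `u` is a left kernel vector of `B(f,g)`, put `H_p = ∑ uᵢ [tⁱ] h_p`; then
`g H_f = f H_g`, so coprimality gives `f ∣ H_f`, whence `H_f = 0` as `deg H_f < n`, and the
triangular Hankel structure forces `u = 0`. Conversely, a common root `z` gives `b(z, s) = 0`, so
`(zⁱ)ᵢ` is a left kernel vector; and if both degrees are `< n`, the row `i = n - 1` vanishes.
-/

open Polynomial

/-- The Bezout matrix of `f, g` (degrees ≤ n): coefficient matrix of
`(f(t)g(s) - f(s)g(t))/(t - s)`. -/
noncomputable def bezoutMatrix (n : ℕ) (f g : Polynomial ℂ) : Matrix (Fin n) (Fin n) ℂ :=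
  fun i j =>
    (((f.map C * C g - C f * g.map C) /ₘ (X - C X)).coeff i).coeff j

namespace Polynomial

section CommRing

variable {R : Type*} [CommRing R]

/-- The outer variable `X` plays the role of `t` and `C X` that of `s`. -/
noncomputable def bezoutian (f g : R[X]) : R[X][X] :=
  (f.map C * C g - C f * g.map C) /ₘ (X - C X)

noncomputable def bezoutianMatrix (n : ℕ) (f g : R[X]) : Matrix (Fin n) (Fin n) R :=
  Matrix.of fun i j => ((bezoutian f g).coeff i).coeff j

theorem X_sub_C_X_mul_bezoutian (f g : R[X]) :
    (X - C X) * bezoutian f g = f.map C * C g - C f * g.map C :=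
  mul_divByMonic_eq_iff_isRoot.2 <| by simp [eval_map, eval₂_C_X, mul_comm]

theorem X_sub_C_X_mul_bezoutian_one (p : R[X]) :
    (X - C X) * bezoutian p 1 = p.map C - C p := by
  simpa using X_sub_C_X_mul_bezoutian p 1

theorem bezoutian_eq_of_X_sub_C_X_mul_eq {f g : R[X]} {q : R[X][X]}
    (h : (X - C X) * q = f.map C * C g - C f * g.map C) : bezoutian f g = q := by
  rw [bezoutian, ← h, mul_divByMonic_cancel_left _ (monic_X_sub_C _)]

theorem bezoutian_comm (f g : R[X]) : bezoutian g f = -bezoutian f g :=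
  bezoutian_eq_of_X_sub_C_X_mul_eq <| by
    linear_combination -X_sub_C_X_mul_bezoutian f g

theorem bezoutian_eq_sub (f g : R[X]) :
    bezoutian f g = C g * bezoutian f 1 - C f * bezoutian g 1 :=
  bezoutian_eq_of_X_sub_C_X_mul_eq <| by
    linear_combination C g * X_sub_C_X_mul_bezoutian_one f - C f * X_sub_C_X_mul_bezoutian_one g

theorem coeff_bezoutian (f g : R[X]) (i : ℕ) :
    (bezoutian f g).coeff i = g * (bezoutian f 1).coeff i - f * (bezoutian g 1).coeff i := by
  rw [bezoutian_eq_sub, coeff_sub, coeff_C_mul, coeff_C_mul]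

theorem coeff_coeff_bezoutian_one (p : R[X]) (i j : ℕ) :
    ((bezoutian p 1).coeff i).coeff j = p.coeff (i + j + 1) := by
  have hrec : ∀ i, (bezoutian p 1).coeff i - X * (bezoutian p 1).coeff (i + 1) =
      C (p.coeff (i + 1)) := fun i => by
    simpa [sub_mul, coeff_X_mul, coeff_C_mul, coeff_map, coeff_C] using
      congrArg (coeff · (i + 1)) (X_sub_C_X_mul_bezoutian_one p)
  induction j generalizing i with
  | zero => simpa using congrArg (coeff · 0) (hrec i)
  | succ j ih =>
    have := congrArg (coeff · (j + 1)) (hrec i)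
    simp only [coeff_sub, coeff_X_mul, coeff_C_succ, sub_eq_zero] at this
    rw [this, ih]
    congr 1
    omega

theorem coeff_bezoutian_one_eq_zero {p : R[X]} {i : ℕ} (hp : p.natDegree ≤ i) :
    (bezoutian p 1).coeff i = 0 :=
  ext fun j => by
    rw [coeff_coeff_bezoutian_one, coeff_zero, coeff_eq_zero_of_natDegree_lt (by omega)]

theorem coeff_bezoutian_eq_zero {f g : R[X]} {i : ℕ} (hf : f.natDegree ≤ i)
    (hg : g.natDegree ≤ i) : (bezoutian f g).coeff i = 0 := by
  rw [coeff_bezoutian, coeff_bezoutian_one_eq_zero hf, coeff_bezoutian_one_eq_zero hg,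
    mul_zero, mul_zero, sub_zero]

theorem Bivariate.coeff_coeff_swap (p : R[X][X]) (i j : ℕ) :
    ((Bivariate.swap p).coeff i).coeff j = (p.coeff j).coeff i := by
  induction p using Polynomial.induction_on' with
  | add p q hp hq => simp [hp, hq]
  | monomial n a =>
    induction a using Polynomial.induction_on' with
    | add a b ha hb => simp_all [map_add]
    | monomial m r =>
      simp only [Bivariate.swap_monomial_monomial, coeff_monomial]
      split_ifs <;> simp [coeff_monomial, *]

theorem swap_bezoutian (f g : R[X]) : Bivariate.swap (bezoutian f g) = bezoutian f g := by
  refine (bezoutian_eq_of_X_sub_C_X_mul_eq ?_).symm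
  have h := congrArg Bivariate.swap (X_sub_C_X_mul_bezoutian f g)
  simp only [map_mul, map_sub, Bivariate.swap_Y, Bivariate.swap_C, Bivariate.swap_map_C,
    map_X] at h
  linear_combination -h

theorem coeff_coeff_bezoutian_comm (f g : R[X]) (i j : ℕ) :
    ((bezoutian f g).coeff i).coeff j = ((bezoutian f g).coeff j).coeff i := by
  rw [← Bivariate.coeff_coeff_swap, swap_bezoutian]

theorem coeff_coeff_bezoutian_eq_zero {f g : R[X]} {n j : ℕ} (hf : f.natDegree ≤ n)
    (hg : g.natDegree ≤ n) (hj : n ≤ j) (i : ℕ) : ((bezoutian f g).coeff i).coeff j = 0 := by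
  rw [coeff_coeff_bezoutian_comm, coeff_bezoutian_eq_zero (hf.trans hj) (hg.trans hj),
    coeff_zero]

theorem bezoutianMatrix_comm (n : ℕ) (f g : R[X]) :
    bezoutianMatrix n g f = -bezoutianMatrix n f g := by
  ext i j
  simp [bezoutianMatrix, bezoutian_comm f g]

theorem det_bezoutianMatrix_eq_zero_of_natDegree_lt {n : ℕ} {f g : R[X]}
    (hf : f.natDegree < n) (hg : g.natDegree < n) : (bezoutianMatrix n f g).det = 0 :=
  Matrix.det_eq_zero_of_row_eq_zero ⟨n - 1, by omega⟩ fun j => by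
    simp [bezoutianMatrix,
      coeff_bezoutian_eq_zero (Nat.le_sub_one_of_lt hf) (Nat.le_sub_one_of_lt hg)]

theorem natDegree_bezoutian_lt {n : ℕ} (hn : 0 < n) {f g : R[X]} (hf : f.natDegree ≤ n)
    (hg : g.natDegree ≤ n) : (bezoutian f g).natDegree < n := by
  have : (bezoutian f g).natDegree ≤ n - 1 := natDegree_le_iff_coeff_eq_zero.2 fun i hi =>
    coeff_bezoutian_eq_zero (hf.trans (by omega)) (hg.trans (by omega))
  omega

end CommRing

section IsDomain

variable {R : Type*} [CommRing R] [IsDomain R]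

theorem eval_C_bezoutian_eq_zero {f g : R[X]} {z : R} (hf : f.IsRoot z) (hg : g.IsRoot z) :
    (bezoutian f g).eval (C z) = 0 := by
  have h := congrArg (eval (C z)) (X_sub_C_X_mul_bezoutian f g)
  simp only [eval_mul, eval_sub, eval_X, eval_C, eval_map, eval₂_at_apply, hf.eq_zero,
    hg.eq_zero, map_zero, zero_mul, mul_zero, sub_self, mul_eq_zero] at h
  exact h.resolve_left (sub_ne_zero.2 (X_ne_C z).symm)

theorem det_bezoutianMatrix_eq_zero_of_isRoot {n : ℕ} (hn : 0 < n) {f g : R[X]}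
    (hf : f.natDegree ≤ n) (hg : g.natDegree ≤ n) {z : R} (hfz : f.IsRoot z)
    (hgz : g.IsRoot z) : (bezoutianMatrix n f g).det = 0 := by
  refine Matrix.exists_vecMul_eq_zero_iff.mp
    ⟨fun i => z ^ (i : ℕ), fun h => by simpa using congrFun h ⟨0, hn⟩, ?_⟩
  ext j
  calc _ = ((bezoutian f g).eval (C z)).coeff j := by
        rw [eval_eq_sum_range' (natDegree_bezoutian_lt hn hf hg), finsetSum_coeff,
          ← Fin.sum_univ_eq_sum_range]
        simp only [Matrix.vecMul, dotProduct, bezoutianMatrix, Matrix.of_apply, ← C_pow,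
          coeff_mul_C]
        exact Finset.sum_congr rfl fun _ _ => mul_comm _ _
    _ = 0 := by rw [eval_C_bezoutian_eq_zero hfz hgz, coeff_zero]

theorem linearIndependent_coeff_bezoutian_one {p : R[X]} {n : ℕ} (hp : p.natDegree = n) :
    LinearIndependent R fun i : Fin n => (bezoutian p 1).coeff i := by
  rw [Fintype.linearIndependent_iff]
  intro c hc k
  induction k using WellFoundedLT.induction with
  | ind k ih =>
    have h := congrArg (coeff · (n - 1 - k)) hc
    simp only [finsetSum_coeff, coeff_smul, coeff_coeff_bezoutian_one, smul_eq_mul,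
      coeff_zero] at h
    rw [Finset.sum_eq_single k] at h
    · have hp0 : p ≠ 0 := by
        rintro rfl
        rw [natDegree_zero] at hp
        exact (hp ▸ k).elim0
      rw [show (k : ℕ) + (n - 1 - k) + 1 = p.natDegree by omega, coeff_natDegree] at h
      exact (mul_eq_zero.1 h).resolve_right (leadingCoeff_ne_zero.2 hp0)
    · intro i _ hik
      rcases lt_or_gt_of_ne hik with hlt | hgt
      · rw [ih i hlt, zero_mul]
      · rw [coeff_eq_zero_of_natDegree_lt, mul_zero]
        have := Fin.lt_def.1 hgt
        omega
    · simp

theorem det_bezoutianMatrix_ne_zero {n : ℕ} {f g : R[X]} (hf : f.natDegree = n)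
    (hg : g.natDegree ≤ n) (hfg : IsCoprime f g) : (bezoutianMatrix n f g).det ≠ 0 := by
  obtain rfl | hn := n.eq_zero_or_pos
  · simp
  rw [Ne, ← Matrix.exists_vecMul_eq_zero_iff]
  rintro ⟨u, hu0, hu⟩
  set H : R[X] → R[X] := fun p => ∑ i, u i • (bezoutian p 1).coeff i
  have hcomb : ∑ i, u i • (bezoutian f g).coeff i = g * H f - f * H g := by
    simp only [H, coeff_bezoutian f g, smul_sub, Finset.sum_sub_distrib, Finset.mul_sum,
      mul_smul_comm]
  have hzero : ∑ i, u i • (bezoutian f g).coeff i = 0 := by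
    ext j
    by_cases hj : j < n
    · simpa [Matrix.vecMul, dotProduct, bezoutianMatrix] using congrFun hu ⟨j, hj⟩
    · simp [coeff_coeff_bezoutian_eq_zero hf.le hg (not_lt.1 hj)]
  have hHf : H f = 0 := by
    have hf0 : f ≠ 0 := by
      rintro rfl
      rw [natDegree_zero] at hf
      omega
    refine eq_zero_of_dvd_of_degree_lt (hfg.dvd_of_dvd_mul_left ⟨H g, ?_⟩) ?_
    · linear_combination hcomb.symm.trans hzero
    · rw [degree_eq_natDegree hf0, hf, degree_lt_iff_coeff_zero]
      intro j hj
      simp only [H, finsetSum_coeff, coeff_smul, coeff_coeff_bezoutian_one, smul_eq_mul]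
      exact Finset.sum_eq_zero fun i _ => by
        rw [coeff_eq_zero_of_natDegree_lt (by omega), mul_zero]
  apply hu0
  ext i
  exact Fintype.linearIndependent_iff.1 (linearIndependent_coeff_bezoutian_one hf) u hHf i

end IsDomain

end Polynomial

/-- For `f, g` of degree at most `n`, not both zero, the Bezout matrix `B(f,g)` is singular
iff `f` and `g` have a common root in `ℂ` or both have degree strictly less than `n`. -/
theorem bezoutMatrix_singular_iff (n : ℕ) (f g : Polynomial ℂ)
    (hfg : ¬(f = 0 ∧ g = 0)) (hf : f.natDegree ≤ n) (hg : g.natDegree ≤ n) :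
    (bezoutMatrix n f g).det = 0 ↔
      (∃ z : ℂ, f.eval z = 0 ∧ g.eval z = 0) ∨ (f.natDegree < n ∧ g.natDegree < n) := by
  change (bezoutianMatrix n f g).det = 0 ↔ _
  constructor
  · intro hdet
    by_contra! h
    have hcop : IsCoprime f g :=
      (isCoprime_iff_aeval_ne_zero_of_isAlgClosed ℂ ℂ f g).2 fun z => by
        simpa [or_iff_not_imp_left] using h.1 z
    rcases hf.eq_or_lt with hfn | hfn
    · exact det_bezoutianMatrix_ne_zero hfn hg hcop hdet
    · refine det_bezoutianMatrix_ne_zero (hg.antisymm (h.2 hfn)) hf hcop.symm ?_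
      rw [bezoutianMatrix_comm, Matrix.det_neg, hdet, mul_zero]
  · rintro (⟨z, hfz, hgz⟩ | ⟨hfn, hgn⟩)
    · have hn : 0 < n := by
        rcases not_and_or.1 hfg with hf0 | hg0
        · exact (natDegree_pos_of_eval₂_root hf0 (RingHom.id ℂ) hfz fun _ => id).trans_le hf
        · exact (natDegree_pos_of_eval₂_root hg0 (RingHom.id ℂ) hgz fun _ => id).trans_le hg
      exact det_bezoutianMatrix_eq_zero_of_isRoot hn hf hg hfz hgz
    · exact det_bezoutianMatrix_eq_zero_of_natDegree_lt hfn hgn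
end

section
/- Let f and g be complex polynomials with deg f ≤ n and deg g = n, and suppose gcd(f,g) has degree d. Then the kernel of the Bezout matrix B(f,g) ∈ M_n(ℂ) has dimension exactly d. -/
open Polynomial

/-!
Read the vector `B(f,g) v` as the polynomial `∑ᵢ (B v)ᵢ Xⁱ` of degree `< n`. Setting `t = a` in the
Bezoutian gives `(g(a) f - f(a) g) / (X - a)`, and the `j`-th coefficient of a quotient
`w / (X - a)` is the value at `a` of `w /ₘ X ^ (j + 1)`. Hence `B v = g * H_f v - f * H_g v`, where
`H_p v = ∑ⱼ vⱼ (p /ₘ X ^ (j + 1))`, and since `deg (B v) < n = deg g`, `B v = 0` iff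
`g ∣ f * H_g v`. The map `H_g` is an isomorphism onto the polynomials of degree `< n`, and among
these the `q` with `g ∣ f * q` are the multiples of `g / gcd(f,g)` by polynomials of degree
`< deg gcd(f,g)`.
-/

namespace Polynomial

section CommRing

variable {R : Type*} [CommRing R]

theorem coeff_divByMonic_X_pow (p : R[X]) (n k : ℕ) : (p /ₘ X ^ n).coeff k = p.coeff (n + k) := by
  nontriviality R
  conv_rhs => rw [← modByMonic_add_div p (X ^ n)]
  have hdeg : (p %ₘ X ^ n).degree < ↑(n + k) :=
    (degree_modByMonic_lt p (monic_X_pow n)).trans_le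
      ((degree_X_pow_le n).trans (by exact_mod_cast Nat.le_add_right n k))
  rw [coeff_add, coeff_eq_zero_of_degree_lt hdeg, zero_add, add_comm, coeff_X_pow_mul]

theorem eval_X_sub_C_mul_divByMonic_X_pow_succ (a : R) (u : R[X]) (j : ℕ) :
    (((X - C a) * u) /ₘ X ^ (j + 1)).eval a = u.coeff j := by
  have hsplit :
      ((X - C a) * u) /ₘ X ^ (j + 1) = C (u.coeff j) + (X - C a) * (u /ₘ X ^ (j + 1)) := by
    ext (_ | k)
    · simp only [sub_mul, coeff_divByMonic_X_pow, add_zero, coeff_sub, coeff_X_mul, coeff_C_mul,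
        coeff_add, coeff_C_zero, mul_coeff_zero, coeff_X_zero, zero_mul, zero_sub]
      ring
    · simp [coeff_divByMonic_X_pow, sub_mul, ← add_assoc, coeff_X_mul]
  simp [hsplit]

theorem sub_divByMonic_X_pow (p q : R[X]) (n : ℕ) :
    (p - q) /ₘ X ^ n = p /ₘ X ^ n - q /ₘ X ^ n := by
  ext k
  simp [coeff_divByMonic_X_pow]

theorem smul_divByMonic_X_pow (c : R) (p : R[X]) (n : ℕ) :
    (c • p) /ₘ X ^ n = c • (p /ₘ X ^ n) := by
  ext k
  simp [coeff_divByMonic_X_pow]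

theorem coeff_eval_C_eq_sum {P : R[X][X]} {n : ℕ} (hP : P.natDegree < n) (a : R) (j : ℕ) :
    (P.eval (C a)).coeff j = ∑ i : Fin n, (P.coeff i).coeff j * a ^ (i : ℕ) := by
  rw [eval_eq_sum_range' hP, finsetSum_coeff,
    ← Fin.sum_univ_eq_sum_range (fun i => (P.coeff i * C a ^ i).coeff j)]
  simp only [← C_pow, coeff_mul_C]

theorem X_sub_C_mul_eval_C_bezoutian (f g : R[X]) (a : R) :
    (X - C a) * (bezoutian f g).eval (C a) = C (g.eval a) * f - C (f.eval a) * g := by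
  have h := congrArg (eval (C a)) (X_sub_C_X_mul_bezoutian f g)
  simp only [eval_mul, eval_sub, eval_X, eval_C, eval_map, eval₂_at_apply] at h
  linear_combination -h

theorem natDegree_bezoutian_le [Nontrivial R] {f g : R[X]} {n : ℕ} (hf : f.natDegree ≤ n + 1)
    (hg : g.natDegree ≤ n + 1) : (bezoutian f g).natDegree ≤ n := by
  have hnum : (f.map C * C g - C f * g.map C).natDegree ≤ n + 1 :=
    (natDegree_sub_le _ _).trans (max_le
      (natDegree_mul_le.trans (by simpa using natDegree_map_le.trans hf))
      (natDegree_mul_le.trans (by simpa using natDegree_map_le.trans hg)))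
  rw [bezoutian, natDegree_divByMonic _ (monic_X_sub_C _), natDegree_X_sub_C]
  omega

noncomputable def hornerMap (n : ℕ) (p : R[X]) : (Fin n → R) →ₗ[R] R[X] :=
  Fintype.linearCombination R fun j : Fin n => p /ₘ X ^ ((j : ℕ) + 1)

theorem hornerMap_apply (n : ℕ) (p : R[X]) (v : Fin n → R) :
    hornerMap n p v = ∑ j, v j • (p /ₘ X ^ ((j : ℕ) + 1)) :=
  Fintype.linearCombination_apply R _ v

theorem hornerMap_eq_divByMonic (n : ℕ) (p : R[X]) (v : Fin n → R) :
    hornerMap n p v =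
      (p * Fintype.linearCombination R (fun j : Fin n => (X : R[X]) ^ (j.rev : ℕ)) v) /ₘ X ^ n := by
  ext k
  simp only [hornerMap_apply, Fintype.linearCombination_apply, finsetSum_coeff, coeff_smul,
    coeff_divByMonic_X_pow, Finset.mul_sum, mul_smul_comm, coeff_mul_X_pow', Fin.val_rev]
  refine Finset.sum_congr rfl fun j _ => ?_
  rw [if_pos (by omega)]
  congr 2
  omega

theorem hornerMap_mem_degreeLT [Nontrivial R] {n : ℕ} {p : R[X]} (hp : p.natDegree ≤ n)
    (v : Fin n → R) : hornerMap n p v ∈ degreeLT R n := by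
  rw [hornerMap_apply]
  refine Submodule.sum_mem _ fun j _ => Submodule.smul_mem _ _ (mem_degreeLT.mpr ?_)
  refine (degree_le_natDegree).trans_lt (Nat.cast_lt.mpr ?_)
  rw [natDegree_divByMonic _ (monic_X_pow _), natDegree_X_pow]
  omega

theorem hornerMap_injective [IsDomain R] {n : ℕ} {p : R[X]} (hp : p.natDegree = n) (hp0 : p ≠ 0) :
    Function.Injective (hornerMap n p) := by
  have hrev : LinearIndependent R fun j : Fin n => (X : R[X]) ^ (j.rev : ℕ) := by
    simpa [Function.comp_def, monomial_one_right_eq_X_pow] using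
      (basisMonomials R).linearIndependent.comp (fun j : Fin n => (j.rev : ℕ))
        (Fin.val_injective.comp Fin.rev_injective)
  rw [← LinearMap.ker_eq_bot, LinearMap.ker_eq_bot']
  intro v hv
  rw [hornerMap_eq_divByMonic, divByMonic_eq_zero_iff (monic_X_pow n), degree_X_pow] at hv
  have hP : Fintype.linearCombination R (fun j : Fin n => (X : R[X]) ^ (j.rev : ℕ)) v = 0 := by
    by_contra hP
    rw [degree_mul, degree_eq_natDegree hp0, hp, degree_eq_natDegree hP] at hv
    exact absurd hv (by norm_cast; omega)
  exact _root_.funext (Fintype.linearIndependent_iff.mp hrev v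
    (by rwa [Fintype.linearCombination_apply] at hP))

theorem mul_mem_degreeLT_add_natDegree_iff [IsDomain R] {p q : R[X]} (hp : p ≠ 0) (m : ℕ) :
    p * q ∈ degreeLT R (m + p.natDegree) ↔ q ∈ degreeLT R m := by
  rw [mem_degreeLT, mem_degreeLT]
  rcases eq_or_ne q 0 with rfl | hq
  · simp
  rw [degree_mul, degree_eq_natDegree hp, degree_eq_natDegree hq]
  norm_cast
  omega

end CommRing

section Field

variable {K : Type*} [Field K]

theorem range_hornerMap {n : ℕ} {p : K[X]} (hp : p.natDegree = n) (hp0 : p ≠ 0) :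
    LinearMap.range (hornerMap n p) = degreeLT K n := by
  refine Submodule.eq_of_le_of_finrank_eq ?_ ?_
  · rintro _ ⟨v, rfl⟩
    exact hornerMap_mem_degreeLT hp.le v
  · rw [LinearMap.finrank_range_of_inj (hornerMap_injective hp hp0),
      (degreeLTEquiv K n).finrank_eq]

theorem finrank_degreeLT_inf_colon [DecidableEq K] {f g : K[X]} (hg : g ≠ 0) :
    Module.finrank K ↥(degreeLT K g.natDegree ⊓ ((Ideal.span {g}).colon {f}).restrictScalars K) =
      (EuclideanDomain.gcd f g).natDegree := by
  have hcop : IsCoprime (f / EuclideanDomain.gcd f g) (g / EuclideanDomain.gcd f g) :=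
    letI := EuclideanDomain.gcdMonoid K[X]
    isCoprime_div_gcd_div_gcd hg
  have hh : EuclideanDomain.gcd f g ≠ 0 := by simp [EuclideanDomain.gcd_eq_zero_iff, hg]
  obtain ⟨f₁, hf₁⟩ := EuclideanDomain.gcd_dvd_left f g
  obtain ⟨g₁, hg₁⟩ := EuclideanDomain.gcd_dvd_right f g
  generalize EuclideanDomain.gcd f g = h at *
  subst hf₁ hg₁
  rw [mul_div_cancel_left₀ _ hh, mul_div_cancel_left₀ _ hh] at hcop
  have hg₁0 : g₁ ≠ 0 := right_ne_zero_of_mul hg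
  have hmul : degreeLT K (h * g₁).natDegree ⊓
      ((Ideal.span {h * g₁}).colon {h * f₁}).restrictScalars K =
      (degreeLT K h.natDegree).map (LinearMap.mulLeft K g₁) := by
    ext q
    simp only [Submodule.mem_inf, Submodule.restrictScalars_mem, Submodule.mem_colon_singleton,
      Ideal.mem_span_singleton, smul_eq_mul, Submodule.mem_map, LinearMap.mulLeft_apply,
      natDegree_mul hh hg₁0]
    constructor
    · rintro ⟨hq, hdvd⟩
      rw [mul_left_comm, mul_dvd_mul_iff_left hh] at hdvd
      obtain ⟨r, rfl⟩ := hcop.symm.dvd_of_dvd_mul_right hdvd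
      exact ⟨r, (mul_mem_degreeLT_add_natDegree_iff hg₁0 _).mp hq, rfl⟩
    · rintro ⟨r, hr, rfl⟩
      exact ⟨(mul_mem_degreeLT_add_natDegree_iff hg₁0 _).mpr hr, r * f₁, by ring⟩
  rw [hmul, ← LinearEquiv.finrank_eq
    (Submodule.equivMapOfInjective _ (mul_right_injective₀ hg₁0) _),
    (degreeLTEquiv K _).finrank_eq, Module.finrank_fin_fun]

end Field

end Polynomial

open scoped Matrix

theorem bezoutMatrix_mulVec {n : ℕ} {f g : ℂ[X]} (hf : f.natDegree ≤ n) (hg : g.natDegree ≤ n)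
    (v : Fin n → ℂ) :
    ((degreeLTEquiv ℂ n).symm (bezoutMatrix n f g *ᵥ v) : ℂ[X]) =
      g * hornerMap n f v - f * hornerMap n g v := by
  cases n with
  | zero => simp [hornerMap_apply, Subsingleton.elim (bezoutMatrix 0 f g *ᵥ v) 0]
  | succ m =>
    refine Polynomial.funext fun a => ?_
    have hK : (bezoutian f g).natDegree < m + 1 := Nat.lt_succ_of_le (natDegree_bezoutian_le hf hg)
    rw [eval_eq_sum_degreeLTEquiv (Submodule.coe_mem _), Subtype.coe_eta,
      LinearEquiv.apply_symm_apply]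
    calc ∑ i, (bezoutMatrix (m + 1) f g *ᵥ v) i * a ^ (i : ℕ)
        = ∑ j, v j * ((bezoutian f g).eval (C a)).coeff j := by
          simp only [Matrix.mulVec, dotProduct, coeff_eval_C_eq_sum hK, Finset.sum_mul,
            Finset.mul_sum]
          rw [Finset.sum_comm]
          exact Finset.sum_congr rfl fun j _ => Finset.sum_congr rfl fun i _ => by
            simp only [bezoutMatrix, bezoutian]; ring
      _ = ∑ j, v j * (((X - C a) * (bezoutian f g).eval (C a)) /ₘ X ^ ((j : ℕ) + 1)).eval a := by
          simp only [eval_X_sub_C_mul_divByMonic_X_pow_succ]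
      _ = (g * hornerMap (m + 1) f v - f * hornerMap (m + 1) g v).eval a := by
          simp only [X_sub_C_mul_eval_C_bezoutian, ← smul_eq_C_mul, sub_divByMonic_X_pow,
            smul_divByMonic_X_pow, hornerMap_apply, eval_sub, eval_mul, eval_finsetSum, eval_smul,
            smul_eq_mul, Finset.mul_sum, ← Finset.sum_sub_distrib]
          exact Finset.sum_congr rfl fun j _ => by ring

theorem bezoutMatrix_mulVec_eq_zero_iff {n : ℕ} {f g : ℂ[X]} (hf : f.natDegree ≤ n)
    (hg : g.natDegree = n) (hg0 : g ≠ 0) (v : Fin n → ℂ) :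
    bezoutMatrix n f g *ᵥ v = 0 ↔ g ∣ f * hornerMap n g v := by
  have hW := bezoutMatrix_mulVec hf hg.le v
  set W := (degreeLTEquiv ℂ n).symm (bezoutMatrix n f g *ᵥ v)
  have hWdeg : (W : ℂ[X]).degree < g.degree := by
    rw [degree_eq_natDegree hg0, hg]
    exact mem_degreeLT.mp W.2
  constructor
  · intro hv
    have h0 : g * hornerMap n f v - f * hornerMap n g v = 0 := by simpa [W, hv] using hW.symm
    exact ⟨hornerMap n f v, (sub_eq_zero.mp h0).symm⟩
  · intro hdvd
    have hW0 : (W : ℂ[X]) = 0 :=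
      eq_zero_of_dvd_of_degree_lt (hW ▸ dvd_sub (dvd_mul_right _ _) hdvd) hWdeg
    simpa [W] using hW0

/-- If `deg f ≤ n`, `deg g = n` and `gcd(f,g)` has degree `d`, then the kernel of the
Bezout matrix `B(f,g)` has dimension exactly `d`. -/
theorem bezoutMatrix_ker_dim (n d : ℕ) (f g : Polynomial ℂ)
    (hf : f.natDegree ≤ n) (hg : g.natDegree = n)
    (hd : (EuclideanDomain.gcd f g).natDegree = d) :
    Module.finrank ℂ (LinearMap.ker (Matrix.toLin' (bezoutMatrix n f g))) = d := by
  rcases eq_or_ne g 0 with rfl | hg0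
  · obtain rfl : n = 0 := by simpa using hg.symm
    rw [EuclideanDomain.gcd_zero_right] at hd
    rw [Module.finrank_zero_of_subsingleton]
    omega
  have hker : LinearMap.ker (Matrix.toLin' (bezoutMatrix n f g)) =
      (((Ideal.span {g}).colon {f}).restrictScalars ℂ).comap (hornerMap n g) := by
    ext v
    simp [bezoutMatrix_mulVec_eq_zero_iff hf hg hg0, Submodule.mem_colon_singleton,
      Ideal.mem_span_singleton, mul_comm]
  rw [hker, LinearEquiv.finrank_eq
      (Submodule.equivMapOfInjective _ (hornerMap_injective hg hg0) _),
    Submodule.map_comap_eq, range_hornerMap hg hg0, ← hg, ← hd]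
  exact finrank_degreeLT_inf_colon hg0
end

section
/- Let g be a real polynomial of degree n with gcd(g, g') = 1 (simple roots) and let B(g, 1) denote the Bezout matrix of g and the constant polynomial 1. Then B(g,1) is invertible, and for distinct roots q, q' of g, the vectors u(q) = (1, q, …, q^{n-1}) and u(q') satisfy u(q)ᵀ B(g,1) u(q') = 0, while u(q)ᵀ B(g,1) u(q) = -g'(q) · (leading coefficient factor); in particular u(q)ᵀ B(g,1) u(q) ≠ 0 for each root q. -/
/-!
`B(g,1)` is the Hankel matrix `(g_{i+j+1})` of coefficients of the divided difference
`D(t,s) = (g(t) - g(s)) / (t - s)`, so `u(q)ᵀ B(g,1) u(q') = D(q, q')`. Evaluating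
`(t - s) D = g(t) - g(s)` shows that `D` vanishes at pairs of distinct roots, and differentiating
it in `t` gives `D(q,q) = g'(q)`, which is nonzero at a simple root. For the Vandermonde matrix `V`
of the `n` distinct complex roots, `V B(g,1) Vᵀ` is therefore diagonal with nonzero diagonal, so
`B(g,1)` is invertible.
-/

open Polynomial

open Matrix

namespace Polynomial

variable {R : Type*} [CommRing R]

theorem eval_eq_sum_range_of_coeff_eq_zero {p : R[X]} {n : ℕ} (h : ∀ i, n ≤ i → p.coeff i = 0)
    (x : R) : p.eval x = ∑ i ∈ Finset.range n, p.coeff i * x ^ i := by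
  rw [eval_eq_sum, sum_def]
  refine Finset.sum_subset (fun i hi => ?_) (fun i _ hi => by simp [notMem_support_iff.mp hi])
  by_contra hin
  exact mem_support_iff.mp hi (h i (not_lt.mp (Finset.mem_range.not.mp hin)))

/-- `(f(t) - f(s)) / (t - s)`, with `t` the outer and `s` the inner variable. -/
noncomputable def divDiff (f : R[X]) : R[X][X] :=
  (f.map C - C f) /ₘ (X - C X)

theorem X_sub_C_X_mul_divDiff (f : R[X]) :
    (X - C X) * divDiff f = f.map C - C f :=
  mul_divByMonic_eq_iff_isRoot.mpr (by simp [eval_map, eval₂_C_X])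

theorem coeff_coeff_divDiff (f : R[X]) (i j : ℕ) :
    ((divDiff f).coeff i).coeff j = f.coeff (i + j + 1) := by
  -- the coefficient of `t ^ (i + 1)` in `(t - s) D = f(t) - f(s)`
  have step (i : ℕ) :
      (divDiff f).coeff i - X * (divDiff f).coeff (i + 1) = C (f.coeff (i + 1)) := by
    simpa [sub_mul, coeff_X_mul, coeff_C] using
      congrArg (coeff · (i + 1)) (X_sub_C_X_mul_divDiff f)
  induction j generalizing i with
  | zero => simpa using congrArg (coeff · 0) (step i)
  | succ j ih =>
    have h := congrArg (coeff · (j + 1)) (step i)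
    simp only [coeff_sub, coeff_X_mul, coeff_C, Nat.add_one_ne_zero, if_false, sub_eq_zero] at h
    rw [h, ih]
    ring_nf

theorem sub_mul_evalEval_divDiff (f : R[X]) (x y : R) :
    (y - x) * (divDiff f).evalEval x y = f.eval y - f.eval x := by
  simpa [evalEval_mul, evalEval_sub, evalEval_C, evalEval_map_C] using
    congrArg (evalEval x y) (X_sub_C_X_mul_divDiff f)

theorem evalEval_divDiff_self (f : R[X]) (x : R) :
    (divDiff f).evalEval x x = f.derivative.eval x := by
  have h := congrArg derivative (X_sub_C_X_mul_divDiff f)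
  rw [derivative_mul, derivative_sub, derivative_sub, derivative_X, derivative_C, derivative_C,
    derivative_map, sub_zero, sub_zero, one_mul] at h
  simpa [evalEval_add, evalEval_mul, evalEval_sub, evalEval_C, evalEval_map_C] using
    congrArg (evalEval x x) h

theorem evalEval_divDiff_eq_zero [NoZeroDivisors R] {f : R[X]} {x y : R} (hx : f.IsRoot x)
    (hy : f.IsRoot y) (hxy : x ≠ y) : (divDiff f).evalEval x y = 0 := by
  have h := sub_mul_evalEval_divDiff f x y
  rw [hx.eq_zero, hy.eq_zero, sub_zero] at h
  exact (mul_eq_zero.mp h).resolve_left (sub_ne_zero_of_ne hxy.symm)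

end Polynomial

theorem Matrix.det_ne_zero_of_rows_orthogonal {R ι : Type*} [CommRing R] [IsDomain R]
    [Fintype ι] [DecidableEq ι] (B M : Matrix ι ι R)
    (hoff : ∀ a b, a ≠ b → M a ⬝ᵥ B *ᵥ M b = 0) (hdiag : ∀ a, M a ⬝ᵥ B *ᵥ M a ≠ 0) :
    B.det ≠ 0 := by
  have hdiagonal : M * B * Mᵀ = diagonal fun a => M a ⬝ᵥ B *ᵥ M a := by
    ext a b
    rw [mul_mul_apply, transpose_transpose]
    rcases eq_or_ne a b with rfl | hab
    · rw [diagonal_apply_eq]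
    · rw [diagonal_apply_ne _ hab, hoff a b hab]
  have hprod : (M * B * Mᵀ).det ≠ 0 := by
    rw [hdiagonal, det_diagonal]
    exact Finset.prod_ne_zero_iff.mpr fun a _ => hdiag a
  intro hB
  exact hprod (by rw [det_mul, det_mul, hB, mul_zero, zero_mul])

theorem Polynomial.Separable.exists_embedding_fin_isRoot {K : Type*} [Field K] [IsAlgClosed K]
    {p : K[X]} {n : ℕ} (hp : p.Separable) (hn : p.natDegree = n) :
    ∃ r : Fin n ↪ K, ∀ i, p.IsRoot (r i) := by
  classical
  have hcard : Fintype.card (p.rootSet K) = n :=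
    (card_rootSet_eq_natDegree hp (IsAlgClosed.splits _)).trans hn
  refine ⟨(Fintype.equivFinOfCardEq hcard).symm.toEmbedding.trans (Function.Embedding.subtype _),
    fun i => ?_⟩
  have hmem := ((Fintype.equivFinOfCardEq hcard).symm i).2
  rw [mem_rootSet] at hmem
  simpa using hmem.2

theorem bezoutMatrix_one_apply (n : ℕ) (f : ℂ[X]) (i j : Fin n) :
    bezoutMatrix n f 1 i j = f.coeff (i + j + 1) := by
  simp only [bezoutMatrix, Polynomial.map_one, map_one, mul_one]
  exact coeff_coeff_divDiff f i j

theorem dotProduct_bezoutMatrix_one_mulVec {n : ℕ} {f : ℂ[X]} (hf : f.natDegree ≤ n)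
    (x y : ℂ) :
    (fun i : Fin n => x ^ (i : ℕ)) ⬝ᵥ bezoutMatrix n f 1 *ᵥ (fun j : Fin n => y ^ (j : ℕ)) =
      (divDiff f).evalEval y x := by
  have hvanish (i j : ℕ) (h : n ≤ i ∨ n ≤ j) : ((divDiff f).coeff i).coeff j = 0 := by
    rw [coeff_coeff_divDiff]
    exact coeff_eq_zero_of_natDegree_lt (by omega)
  have hrow (i : ℕ) (hi : n ≤ i) : (divDiff f).coeff i = 0 := by
    ext j
    simp [hvanish i j (.inl hi)]
  rw [evalEval, eval_eq_sum_range_of_coeff_eq_zero hrow, eval_finsetSum, Finset.sum_range]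
  refine Fintype.sum_congr _ _ fun i => ?_
  rw [eval_mul, eval_pow, eval_C,
    eval_eq_sum_range_of_coeff_eq_zero fun j hj => hvanish i j (.inr hj), Finset.sum_range,
    mulVec, dotProduct, Finset.mul_sum, Finset.sum_mul]
  refine Fintype.sum_congr _ _ fun j => ?_
  rw [bezoutMatrix_one_apply, coeff_coeff_divDiff]
  ring

/-- For a real polynomial `g` of degree `n` with simple roots (`gcd(g,g') = 1`), the
Bezout matrix `B(g,1)` is invertible; for distinct (complex) roots `q ≠ q'` of `g` the
vectors `u(q) = (1, q, …, q^{n-1})` satisfy `u(q)ᵀ B(g,1) u(q') = 0`, while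
`u(q)ᵀ B(g,1) u(q) ≠ 0` for every root `q`. -/
theorem bezout_g_one_orthogonality (n : ℕ) (g : Polynomial ℝ)
    (hg : g.natDegree = n) (hsep : IsCoprime g g.derivative) :
    (bezoutMatrix n (g.map (algebraMap ℝ ℂ)) 1).det ≠ 0 ∧
    (∀ q q' : ℂ, (g.map (algebraMap ℝ ℂ)).IsRoot q → (g.map (algebraMap ℝ ℂ)).IsRoot q' →
      q ≠ q' →
      dotProduct (fun i : Fin n => q ^ (i : ℕ))
        ((bezoutMatrix n (g.map (algebraMap ℝ ℂ)) 1).mulVec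
          (fun i : Fin n => q' ^ (i : ℕ))) = 0) ∧
    (∀ q : ℂ, (g.map (algebraMap ℝ ℂ)).IsRoot q →
      dotProduct (fun i : Fin n => q ^ (i : ℕ))
        ((bezoutMatrix n (g.map (algebraMap ℝ ℂ)) 1).mulVec
          (fun i : Fin n => q ^ (i : ℕ))) ≠ 0) := by
  set G := g.map (algebraMap ℝ ℂ)
  have hGsep : G.Separable := Separable.map hsep
  have hGn : G.natDegree = n := (natDegree_map _).trans hg
  have hoff (q q' : ℂ) (hq : G.IsRoot q) (hq' : G.IsRoot q') (hne : q ≠ q') :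
      (fun i : Fin n => q ^ (i : ℕ)) ⬝ᵥ
        bezoutMatrix n G 1 *ᵥ (fun i : Fin n => q' ^ (i : ℕ)) = 0 := by
    rw [dotProduct_bezoutMatrix_one_mulVec hGn.le]
    exact evalEval_divDiff_eq_zero hq' hq hne.symm
  have hdiag (q : ℂ) (hq : G.IsRoot q) :
      (fun i : Fin n => q ^ (i : ℕ)) ⬝ᵥ
        bezoutMatrix n G 1 *ᵥ (fun i : Fin n => q ^ (i : ℕ)) ≠ 0 := by
    rw [dotProduct_bezoutMatrix_one_mulVec hGn.le, evalEval_divDiff_self]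
    exact hGsep.eval₂_derivative_ne_zero (RingHom.id ℂ) hq
  obtain ⟨r, hr⟩ := hGsep.exists_embedding_fin_isRoot hGn
  exact ⟨det_ne_zero_of_rows_orthogonal _ (vandermonde r)
      (fun a b hab => hoff _ _ (hr a) (hr b) (r.injective.ne hab)) (fun a => hdiag _ (hr a)),
    hoff, hdiag⟩
end
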